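/- Let m ≥ 2, let α ∈ 𝕋 = ℝ/ℤ, and let f : 𝕋 → 𝕋 be continuous. Define T : 𝕋^m → 𝕋^m by T(x_1, x_2, x_3, ..., x_m) = (x_1 + α, x_2 + f(x_1), x_3 + x_2, ..., x_m + x_{m−1}). Then T is distal: for every pair of distinct points x ≠ y in 𝕋^m, inf_{n ∈ ℤ} d(T^n x, T^n y) > 0, where d is the standard metric on 𝕋^m. -/

import Mathlib

open Filter Topology

namespace Stmt12Aux

/-- Extend a finite tuple to `ℕ` with junk value `0`. -/
noncomputable def ext (m : ℕ) (x : Fin m → UnitAddCircle) (k : ℕ) : UnitAddCircle :=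
  if h : k < m then x ⟨k, h⟩ else 0

/-- The increments used to invert the skew product. -/
noncomputable def aux (α : UnitAddCircle) (f : UnitAddCircle → UnitAddCircle)
    (z : ℕ → UnitAddCircle) (k : ℕ) : UnitAddCircle :=
  Nat.rec α (fun k prev => if k = 0 then f (z 0 - α) else z k - prev) k

lemma aux_zero (α : UnitAddCircle) (f : UnitAddCircle → UnitAddCircle)
    (z : ℕ → UnitAddCircle) : aux α f z 0 = α := rfl

lemma aux_one (α : UnitAddCircle) (f : UnitAddCircle → UnitAddCircle)
    (z : ℕ → UnitAddCircle) : aux α f z 1 = f (z 0 - α) := rfl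

lemma aux_succ_succ (α : UnitAddCircle) (f : UnitAddCircle → UnitAddCircle)
    (z : ℕ → UnitAddCircle) (k : ℕ) :
    aux α f z (k + 2) = z (k + 1) - aux α f z (k + 1) := by
  show (if k + 1 = 0 then f (z 0 - α) else z (k+1) - aux α f z (k+1)) = _
  rw [if_neg (by omega)]

lemma aux_congr (α : UnitAddCircle) (f : UnitAddCircle → UnitAddCircle)
    (z w : ℕ → UnitAddCircle) (i : ℕ) (h : ∀ j < i, z j = w j) :
    aux α f z i = aux α f w i := by
  induction i with
  | zero => rfl
  | succ k ih =>
    match k with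
    | 0 => rw [aux_one, aux_one, h 0 (by omega)]
    | (k'+1) =>
      rw [aux_succ_succ, aux_succ_succ, h (k'+1) (by omega),
        ih (fun j hj => h j (by omega))]

lemma continuous_aux (m : ℕ) (α : UnitAddCircle) (f : UnitAddCircle → UnitAddCircle)
    (hf : Continuous f) (k : ℕ) :
    Continuous (fun x : Fin m → UnitAddCircle => aux α f (ext m x) k) := by
  have hext : ∀ j : ℕ, Continuous (fun x : Fin m → UnitAddCircle => ext m x j) := by
    intro j
    unfold ext
    split
    · exact continuous_apply _
    · exact continuous_const
  induction k with
  | zero => exact continuous_const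
  | succ k ih =>
    match k with
    | 0 =>
      show Continuous fun x : Fin m → UnitAddCircle => aux α f (ext m x) 1
      simp only [aux_one]
      exact hf.comp ((hext 0).sub continuous_const)
    | (k'+1) =>
      show Continuous fun x : Fin m → UnitAddCircle => aux α f (ext m x) (k' + 2)
      simp only [aux_succ_succ]
      exact (hext (k'+1)).sub ih

end Stmt12Aux

open Stmt12Aux in
/-- For `m ≥ 2`, `α ∈ 𝕋 = ℝ/ℤ`, and continuous `f : 𝕋 → 𝕋`, the skew
product `T(x_1, …, x_m) = (x_1 + α, x_2 + f(x_1), x_3 + x_2, …, x_m + x_{m-1})` is a distal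
homeomorphism of `𝕋^m`: for all `x ≠ y`, `inf_{n ∈ ℤ} d(T^n x, T^n y) > 0`. -/
theorem stmt12 (m : ℕ) (hm : 2 ≤ m) (α : UnitAddCircle)
    (f : UnitAddCircle → UnitAddCircle) (hf : Continuous f)
    (T : (Fin m → UnitAddCircle) → (Fin m → UnitAddCircle))
    (hT : ∀ (x : Fin m → UnitAddCircle) (i : Fin m),
      T x i = x i +
        (if (i : ℕ) = 0 then α
         else if (i : ℕ) = 1 then f (x ⟨0, by omega⟩)
         else x ⟨(i : ℕ) - 1, by have := i.isLt; omega⟩)) :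
    ∃ e : (Fin m → UnitAddCircle) ≃ₜ (Fin m → UnitAddCircle),
      (∀ x, e x = T x) ∧
      ∀ x y : Fin m → UnitAddCircle, x ≠ y →
        0 < ⨅ n : ℤ, dist ((e.toEquiv ^ n) x) ((e.toEquiv ^ n) y) := by
  classical
  -- the inverse map
  set S : (Fin m → UnitAddCircle) → (Fin m → UnitAddCircle) :=
    fun y j => y j - aux α f (ext m y) (j : ℕ) with hS
  -- key computation: the increments of `T x` recover the increments
  have key : ∀ (x : Fin m → UnitAddCircle) (k : ℕ), k < m →
      aux α f (ext m (T x)) k = ext m (T x) k - ext m x k := by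
    intro x k
    induction k with
    | zero =>
      intro hk
      rw [aux_zero]
      simp only [ext, dif_pos hk]
      rw [hT x ⟨0, hk⟩]
      simp
    | succ k ih =>
      intro hk
      match k with
      | 0 =>
        rw [aux_one]
        have h0 : 0 < m := by omega
        simp only [ext, dif_pos hk, dif_pos h0]
        rw [hT x ⟨0, h0⟩, hT x ⟨1, hk⟩]
        simp
      | (k'+1) =>
        rw [show k' + 1 + 1 = k' + 2 from rfl, aux_succ_succ]
        have hk1 : k' + 1 < m := by omega
        rw [ih hk1]
        simp only [ext, dif_pos hk, dif_pos hk1]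
        rw [hT x ⟨k'+2, hk⟩]
        have : ((⟨k'+2, hk⟩ : Fin m) : ℕ) = k'+2 := rfl
        simp only [this]
        rw [if_neg (by omega), if_neg (by omega)]
        have h2 : ((k':ℕ)+2) - 1 = k'+1 := by omega
        simp only [h2]
        abel
  -- left inverse
  have hleft : ∀ x, S (T x) = x := by
    intro x
    funext j
    show T x j - aux α f (ext m (T x)) (j : ℕ) = x j
    rw [key x j j.isLt]
    simp only [ext, dif_pos j.isLt, Fin.eta]
    abel
  -- right inverse
  have hright : ∀ y, T (S y) = y := by
    intro y
    funext j
    rw [hT (S y) j]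
    show (y j - aux α f (ext m y) (j : ℕ)) + _ = y j
    rcases Nat.lt_or_ge (j : ℕ) 2 with hj | hj
    · rcases Nat.lt_or_ge (j : ℕ) 1 with hj0 | hj1
      · have h0 : (j : ℕ) = 0 := by omega
        rw [if_pos h0]
        have : aux α f (ext m y) (j : ℕ) = α := by rw [h0, aux_zero]
        rw [this]; abel
      · have h1 : (j : ℕ) = 1 := by omega
        rw [if_neg (by omega), if_pos h1]
        have hS0 : S y ⟨0, by omega⟩ = y ⟨0, by omega⟩ - α := by
          show y _ - aux α f (ext m y) ((⟨0, by omega⟩ : Fin m) : ℕ) = _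
          rw [show ((⟨0, by omega⟩ : Fin m) : ℕ) = 0 from rfl, aux_zero]
        rw [hS0]
        have : aux α f (ext m y) (j : ℕ) = f (ext m y 0 - α) := by rw [h1, aux_one]
        rw [this]
        have h0m : (0:ℕ) < m := by omega
        simp only [ext, dif_pos h0m]
        abel
    · obtain ⟨k, hk⟩ : ∃ k, (j : ℕ) = k + 2 := ⟨(j:ℕ) - 2, by omega⟩
      rw [if_neg (by omega), if_neg (by omega)]
      have hk1 : k + 1 < m := by have := j.isLt; omega
      have hSk : S y ⟨(j:ℕ) - 1, by have := j.isLt; omega⟩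
          = y ⟨k+1, hk1⟩ - aux α f (ext m y) (k+1) := by
        show y _ - aux α f (ext m y) _ = _
        have : ((⟨(j:ℕ)-1, by have := j.isLt; omega⟩ : Fin m) : ℕ) = k+1 := by
          simp [hk]
        simp only [this]
        congr 1 <;> simp [Fin.ext_iff, hk]
      rw [hSk]
      have haux : aux α f (ext m y) (j : ℕ)
          = ext m y (k+1) - aux α f (ext m y) (k+1) := by
        rw [hk, aux_succ_succ]
      rw [haux]
      simp only [ext, dif_pos hk1]
      abel
  -- continuity of T
  have hTc : Continuous T := by
    apply continuous_pi
    intro i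
    have : (fun x => T x i) = fun x : Fin m → UnitAddCircle => x i +
        (if (i : ℕ) = 0 then α
         else if (i : ℕ) = 1 then f (x ⟨0, by omega⟩)
         else x ⟨(i : ℕ) - 1, by have := i.isLt; omega⟩) := by
      funext x; exact hT x i
    rw [this]
    apply (continuous_apply i).add
    split
    · exact continuous_const
    · split
      · exact hf.comp (continuous_apply _)
      · exact continuous_apply _
  have hSc : Continuous S := by
    apply continuous_pi
    intro j
    exact (continuous_apply j).sub (continuous_aux m α f hf (j : ℕ))
  -- the homeomorphism
  refine ⟨⟨⟨T, S, hleft, hright⟩, hTc, hSc⟩, fun x => rfl, ?_⟩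
  intro x y hxy
  -- minimal index of difference
  have hex : ∃ k, ∃ hk : k < m, x ⟨k, hk⟩ ≠ y ⟨k, hk⟩ := by
    by_contra h
    push_neg at h
    exact hxy (funext fun j => h j j.isLt)
  set n0 := Nat.find hex with hn0
  obtain ⟨hn0m, hne⟩ := Nat.find_spec hex
  set i0 : Fin m := ⟨n0, hn0m⟩ with hi0
  have hmin : ∀ j : Fin m, (j : ℕ) < n0 → x j = y j := by
    intro j hj
    have := Nat.find_min hex hj
    push_neg at this
    simpa using this j.isLt
  -- the invariant
  set Q : (Fin m → UnitAddCircle) → (Fin m → UnitAddCircle) → Prop :=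
    fun u v => (∀ j : Fin m, (j : ℕ) < n0 → u j = v j) ∧ u i0 - v i0 = x i0 - y i0
    with hQ
  have hQxy : Q x y := ⟨hmin, rfl⟩
  -- T preserves Q
  have hincr : ∀ u v : Fin m → UnitAddCircle, (∀ j : Fin m, (j : ℕ) < n0 → u j = v j) →
      ∀ i : Fin m, (i : ℕ) ≤ n0 →
      (if (i : ℕ) = 0 then α
         else if (i : ℕ) = 1 then f (u ⟨0, by omega⟩)
         else u ⟨(i : ℕ) - 1, by have := i.isLt; omega⟩) =
      (if (i : ℕ) = 0 then α
         else if (i : ℕ) = 1 then f (v ⟨0, by omega⟩)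
         else v ⟨(i : ℕ) - 1, by have := i.isLt; omega⟩) := by
    intro u v h i hi
    split
    · rfl
    · split
      · next h0 h1 =>
        rw [h ⟨0, by omega⟩ (by simp; omega)]
      · next h0 h1 =>
        rw [h ⟨(i : ℕ) - 1, by have := i.isLt; omega⟩ (by simp; omega)]
  have hstepT : ∀ u v, Q u v → Q (T u) (T v) := by
    intro u v ⟨h1, h2⟩
    constructor
    · intro j hj
      rw [hT u j, hT v j, h1 j hj, hincr u v h1 j (le_of_lt hj)]
    · rw [hT u i0, hT v i0, hincr u v h1 i0 (le_refl _),
        add_sub_add_right_eq_sub, h2]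
  have hextcongr : ∀ u v : Fin m → UnitAddCircle,
      (∀ j : Fin m, (j : ℕ) < n0 → u j = v j) →
      ∀ j : ℕ, j < n0 → ext m u j = ext m v j := by
    intro u v h j hj
    unfold ext
    split
    · next hjm => exact h ⟨j, hjm⟩ hj
    · rfl
  have hstepS : ∀ u v, Q u v → Q (S u) (S v) := by
    intro u v ⟨h1, h2⟩
    constructor
    · intro j hj
      show u j - aux α f (ext m u) (j : ℕ) = v j - aux α f (ext m v) (j : ℕ)
      rw [h1 j hj, aux_congr α f _ _ _ (fun j' hj' =>
        hextcongr u v h1 j' (lt_trans hj' hj))]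
    · show (u i0 - aux α f (ext m u) (i0 : ℕ)) - (v i0 - aux α f (ext m v) (i0 : ℕ))
        = x i0 - y i0
      rw [aux_congr α f (ext m u) (ext m v) (i0 : ℕ) (fun j' hj' =>
        hextcongr u v h1 j' hj')]
      rw [← h2]
      abel
  -- Q holds along the whole orbit
  set e : (Fin m → UnitAddCircle) ≃ₜ (Fin m → UnitAddCircle) :=
    ⟨⟨T, S, hleft, hright⟩, hTc, hSc⟩ with he
  have horb : ∀ n : ℤ, ∀ u v, Q u v → Q ((e.toEquiv ^ n) u) ((e.toEquiv ^ n) v) := by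
    intro n
    induction n using Int.induction_on with
    | zero => intro u v h; simpa using h
    | succ k ih =>
      intro u v h
      rw [zpow_add_one]
      simp only [Equiv.Perm.mul_apply]
      exact ih _ _ (hstepT u v h)
    | pred k ih =>
      intro u v h
      rw [zpow_sub_one]
      simp only [Equiv.Perm.mul_apply]
      have hinv : ∀ w, (e.toEquiv⁻¹) w = S w := fun w => rfl
      rw [hinv u, hinv v]
      exact ih _ _ (hstepS u v h)
  -- conclude
  have hd : 0 < dist (x i0) (y i0) := by
    rw [dist_pos]
    exact hne
  refine lt_of_lt_of_le hd (le_ciInf fun n => ?_)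
  have hQn := horb n x y hQxy
  have : dist (((e.toEquiv ^ n) x) i0) (((e.toEquiv ^ n) y) i0) = dist (x i0) (y i0) := by
    rw [dist_eq_norm, dist_eq_norm, hQn.2]
  rw [← this]
  exact dist_le_pi_dist _ _ i0
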